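/- arXiv:1810.08882 — 2 statements merged into one kernel-verified Lean document; each statement's English description precedes it below -/
import Mathlib

section
/- Let C be an additive category and I an ideal of C with I² = 0. Then an object X of C is a zero object if and only if its image in C/I is a zero object. Consequently, the quotient functor C → C/I is a representation equivalence: it is full, essentially surjective, and induces a bijection between isomorphism classes of objects. -/
open CategoryTheory CategoryTheory.Limits

/-!
Modulo a square-zero ideal `I`, an endomorphism congruent to the identity is `𝟙 + u` with
`u ∈ I`, hence `u ≫ u = 0`, so it is invertible with inverse `𝟙 - u`. Lifting an isomorphism
of `C/I` and its inverse therefore gives morphisms `f, g` with `f ≫ g` and `g ≫ f` invertible,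
so `f` is an isomorphism: the quotient functor reflects isomorphisms. Likewise `𝟙 X ∈ I` forces
`𝟙 X = 𝟙 X ≫ 𝟙 X = 0`.
-/

namespace CategoryTheory

lemma isIso_of_isIso_comp_of_isIso_comp {C : Type*} [Category C] {X Y : C}
    (f : X ⟶ Y) (g : Y ⟶ X) [IsIso (f ≫ g)] [IsIso (g ≫ f)] : IsIso f :=
  have : IsSplitMono f :=
    IsSplitMono.mk' ⟨g ≫ inv (f ≫ g), by rw [← Category.assoc, IsIso.hom_inv_id]⟩
  have : IsSplitEpi f := IsSplitEpi.mk' ⟨inv (g ≫ f) ≫ g, by simp⟩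
  isIso_of_mono_of_isSplitEpi f

lemma Preadditive.isIso_of_sub_id_comp_self_eq_zero {C : Type*} [Category C] [Preadditive C]
    {X : C} (f : X ⟶ X) (h : (f - 𝟙 X) ≫ (f - 𝟙 X) = 0) : IsIso f := by
  have hnil : IsNilpotent (show End X from f - 𝟙 X) := ⟨2, by rw [pow_two]; exact h⟩
  simpa [← isUnit_iff_isIso] using hnil.isUnit_add_one

namespace Functor

variable {C D : Type*} [Category C] [Category D] (F : C ⥤ D)

def mapIsoClasses :
    Quot (fun X Y : C => Nonempty (X ≅ Y)) → Quot (fun X Y : D => Nonempty (X ≅ Y)) :=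
  Quot.map F.obj (fun _ _ h => h.elim fun e => ⟨F.mapIso e⟩)

lemma mapIsoClasses_injective [F.Full] [F.ReflectsIsomorphisms] :
    Function.Injective F.mapIsoClasses := by
  have hequiv : _root_.Equivalence (fun X Y : D => Nonempty (X ≅ Y)) :=
    ⟨fun X => ⟨Iso.refl X⟩, fun ⟨e⟩ => ⟨e.symm⟩, fun ⟨e⟩ ⟨e'⟩ => ⟨e ≪≫ e'⟩⟩
  rintro ⟨X⟩ ⟨Y⟩ hXY
  obtain ⟨e⟩ := hequiv.eqvGen_iff.mp (Quot.eqvGen_exact hXY)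
  have : IsIso (F.preimage e.hom) :=
    (isIso_iff_of_reflects_iso _ F).mp (by rw [F.map_preimage]; infer_instance)
  exact Quot.sound ⟨asIso (F.preimage e.hom)⟩

lemma mapIsoClasses_surjective [F.EssSurj] : Function.Surjective F.mapIsoClasses := by
  rintro ⟨Y⟩
  exact ⟨Quot.mk _ (F.objPreimage Y), Quot.sound ⟨F.objObjPreimageIso Y⟩⟩

end Functor

namespace Quotient

variable {C : Type*} [Category C]

lemma isZero_functor_obj (r : HomRel C) {X : C} (hX : IsZero X) :
    IsZero ((functor r).obj X) := by
  refine ⟨fun Y => ⟨⟨⟨(functor r).map (hX.to_ Y.as)⟩, ?_⟩⟩,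
    fun Y => ⟨⟨⟨(functor r).map (hX.from_ Y.as)⟩, ?_⟩⟩⟩
  · rintro ⟨f⟩
    exact congrArg (Quot.mk _) (hX.eq_of_src f _)
  · rintro ⟨f⟩
    exact congrArg (Quot.mk _) (hX.eq_of_tgt f _)

variable [Preadditive C] (I : ∀ X Y : C, AddSubgroup (X ⟶ Y)) (r : HomRel C)

lemma congruence_of_ideal (hr : ∀ {X Y : C} (f g : X ⟶ Y), r f g ↔ f - g ∈ I X Y)
    (hleft : ∀ {X Y Z : C} (f : X ⟶ Y) (g : Y ⟶ Z), f ∈ I X Y → f ≫ g ∈ I X Z)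
    (hright : ∀ {X Y Z : C} (f : X ⟶ Y) (g : Y ⟶ Z), g ∈ I Y Z → f ≫ g ∈ I X Z) :
    Congruence r where
  equivalence :=
    { refl := fun f => (hr f f).mpr (by simp)
      symm := fun {f g} h => (hr g f).mpr (by simpa using (I _ _).neg_mem ((hr f g).mp h))
      trans := fun {f g k} h₁ h₂ => (hr f k).mpr
        (by simpa using (I _ _).add_mem ((hr f g).mp h₁) ((hr g k).mp h₂)) }
  comp_left f g g' h := (hr _ _).mpr
    (by simpa [Preadditive.comp_sub] using hright f (g - g') ((hr g g').mp h))
  comp_right g h := (hr _ _).mpr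
    (by simpa [Preadditive.sub_comp] using hleft _ g ((hr _ _).mp h))

variable {I r} [Congruence r]

lemma functor_map_eq_iff_sub_mem (hr : ∀ {X Y : C} (f g : X ⟶ Y), r f g ↔ f - g ∈ I X Y)
    {X Y : C} (f g : X ⟶ Y) :
    (functor r).map f = (functor r).map g ↔ f - g ∈ I X Y := by
  rw [functor_map_eq_iff, hr]

lemma isIso_of_functor_map_eq_id (hr : ∀ {X Y : C} (f g : X ⟶ Y), r f g ↔ f - g ∈ I X Y)
    (hsq : ∀ {X Y Z : C} (f : X ⟶ Y) (g : Y ⟶ Z), f ∈ I X Y → g ∈ I Y Z → f ≫ g = 0)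
    {X : C} {f : X ⟶ X} (hf : (functor r).map f = 𝟙 _) : IsIso f := by
  have hmem : f - 𝟙 X ∈ I X X := by
    rwa [← functor_map_eq_iff_sub_mem hr, Functor.map_id]
  exact Preadditive.isIso_of_sub_id_comp_self_eq_zero f (hsq _ _ hmem hmem)

lemma reflectsIsomorphisms_functor (hr : ∀ {X Y : C} (f g : X ⟶ Y), r f g ↔ f - g ∈ I X Y)
    (hsq : ∀ {X Y Z : C} (f : X ⟶ Y) (g : Y ⟶ Z), f ∈ I X Y → g ∈ I Y Z → f ≫ g = 0) :
    (functor r).ReflectsIsomorphisms where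
  reflects f _ := by
    let g := (functor r).preimage (inv ((functor r).map f))
    have : IsIso (f ≫ g) := isIso_of_functor_map_eq_id hr hsq (by simp [g])
    have : IsIso (g ≫ f) := isIso_of_functor_map_eq_id hr hsq (by simp [g])
    exact isIso_of_isIso_comp_of_isIso_comp f g

lemma isZero_of_isZero_functor_obj (hr : ∀ {X Y : C} (f g : X ⟶ Y), r f g ↔ f - g ∈ I X Y)
    (hsq : ∀ {X Y Z : C} (f : X ⟶ Y) (g : Y ⟶ Z), f ∈ I X Y → g ∈ I Y Z → f ≫ g = 0)
    {X : C} (hX : IsZero ((functor r).obj X)) : IsZero X := by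
  have hmem : 𝟙 X ∈ I X X := by
    simpa using (functor_map_eq_iff_sub_mem hr (𝟙 X) 0).mp (hX.eq_of_src _ _)
  rw [IsZero.iff_id_eq_zero, ← Category.id_comp (𝟙 X)]
  exact hsq _ _ hmem hmem

end Quotient

end CategoryTheory

/-- If `I` is an ideal of an additive (preadditive) category `C` with `I² = 0`,
then an object of `C` is zero iff its image in the quotient category `C/I` is
zero; consequently the quotient functor `C → C/I` is a representation
equivalence: full, essentially surjective and inducing a bijection on
isomorphism classes of objects. -/
theorem stmt_3 {C : Type*} [Category C] [Preadditive C]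
    (I : ∀ X Y : C, AddSubgroup (X ⟶ Y))
    (hleft : ∀ {X Y Z : C} (f : X ⟶ Y) (g : Y ⟶ Z), f ∈ I X Y → f ≫ g ∈ I X Z)
    (hright : ∀ {X Y Z : C} (f : X ⟶ Y) (g : Y ⟶ Z), g ∈ I Y Z → f ≫ g ∈ I X Z)
    (hsq : ∀ {X Y Z : C} (f : X ⟶ Y) (g : Y ⟶ Z), f ∈ I X Y → g ∈ I Y Z → f ≫ g = 0)
    (r : HomRel C) (hr : ∀ {X Y : C} (f g : X ⟶ Y), r f g ↔ f - g ∈ I X Y) :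
    (∀ X : C, IsZero X ↔ IsZero ((Quotient.functor r).obj X)) ∧
    (Quotient.functor r).Full ∧
    (Quotient.functor r).EssSurj ∧
    Function.Bijective
      (Quot.map (Quotient.functor r).obj
        (fun X Y h => h.elim fun e => ⟨(Quotient.functor r).mapIso e⟩) :
        Quot (fun X Y : C => Nonempty (X ≅ Y)) →
        Quot (fun X Y : CategoryTheory.Quotient r => Nonempty (X ≅ Y))) := by
  have := Quotient.congruence_of_ideal I r hr hleft hright
  have := Quotient.reflectsIsomorphisms_functor hr hsq
  exact ⟨fun X => ⟨Quotient.isZero_functor_obj r, Quotient.isZero_of_isZero_functor_obj hr hsq⟩,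
    inferInstance, inferInstance,
    (Quotient.functor r).mapIsoClasses_injective, (Quotient.functor r).mapIsoClasses_surjective⟩
end

section
/- Let A and B be additive categories and U : A^op × B → Ab a biadditive functor. In the bimodule category El(U), the element α ⊕ β ∈ U(A ⊕ A', B ⊕ B') (defined as the image of (α, β) under the canonical isomorphism U(A,B) × U(A',B') ≅ U(A ⊕ A', B ⊕ B')) is a biproduct of α and β. Hence El(U) is an additive category if A and B are. -/
open CategoryTheory CategoryTheory.Limits Opposite

/-!
Each `U(p, q)` is a group homomorphism, and biadditivity makes it vanish as soon as `p` or
`q` is zero. Transporting `α ⊕ β` along one of the structure maps of the biproducts therefore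
picks out one summand: the other one is sent through a composite such as `inl ≫ snd`, which
is zero.
-/

namespace CategoryTheory.Functor

variable {A B : Type*} [Category A] [Category B] (U : (Aᵒᵖ × B) ⥤ AddCommGrpCat)

def IsAdditiveInFst [Preadditive A] : Prop :=
  ∀ {X X' : Aᵒᵖ} {Y Y' : B} (f f' : X ⟶ X') (g : Y ⟶ Y') (u : U.obj (X, Y)),
    U.map ((f + f', g) : (X, Y) ⟶ (X', Y')) u
      = U.map ((f, g) : (X, Y) ⟶ (X', Y')) u + U.map ((f', g) : (X, Y) ⟶ (X', Y')) u

def IsAdditiveInSnd [Preadditive B] : Prop :=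
  ∀ {X X' : Aᵒᵖ} {Y Y' : B} (f : X ⟶ X') (g g' : Y ⟶ Y') (u : U.obj (X, Y)),
    U.map ((f, g + g') : (X, Y) ⟶ (X', Y')) u
      = U.map ((f, g) : (X, Y) ⟶ (X', Y')) u + U.map ((f, g') : (X, Y) ⟶ (X', Y')) u

/-- The element `α ⊕ β`, i.e. the image of `(α, β)` under the canonical isomorphism
`U(A₁, B₁) × U(A₂, B₂) ≅ U(A₁ ⊞ A₂, B₁ ⊞ B₂)`. -/
noncomputable def biprodElement [Preadditive A] [Preadditive B] {A₁ A₂ : A} {B₁ B₂ : B}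
    [HasBinaryBiproduct A₁ A₂] [HasBinaryBiproduct B₁ B₂]
    (α : U.obj (op A₁, B₁)) (β : U.obj (op A₂, B₂)) : U.obj (op (A₁ ⊞ A₂), B₁ ⊞ B₂) :=
  U.map (((biprod.fst : A₁ ⊞ A₂ ⟶ A₁).op, (biprod.inl : B₁ ⟶ B₁ ⊞ B₂)) :
      (op A₁, B₁) ⟶ (op (A₁ ⊞ A₂), B₁ ⊞ B₂)) α
    + U.map (((biprod.snd : A₁ ⊞ A₂ ⟶ A₂).op, (biprod.inr : B₂ ⟶ B₁ ⊞ B₂)) :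
      (op A₂, B₂) ⟶ (op (A₁ ⊞ A₂), B₁ ⊞ B₂)) β

variable {U}

lemma IsAdditiveInFst.map_zero_fst [Preadditive A] (hU : U.IsAdditiveInFst)
    {X X' : Aᵒᵖ} {Y Y' : B} (g : Y ⟶ Y') (u : U.obj (X, Y)) :
    U.map (((0 : X ⟶ X'), g) : (X, Y) ⟶ (X', Y')) u = 0 := by
  have h := hU (0 : X ⟶ X') 0 g u
  rwa [add_zero, left_eq_add] at h

lemma IsAdditiveInSnd.map_zero_snd [Preadditive B] (hU : U.IsAdditiveInSnd)
    {X X' : Aᵒᵖ} {Y Y' : B} (f : X ⟶ X') (u : U.obj (X, Y)) :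
    U.map ((f, (0 : Y ⟶ Y')) : (X, Y) ⟶ (X', Y')) u = 0 := by
  have h := hU f (0 : Y ⟶ Y') 0 u
  rwa [add_zero, left_eq_add] at h

section Biprod

variable [Preadditive A] [Preadditive B] {A₁ A₂ : A} {B₁ B₂ : B}
  [HasBinaryBiproduct A₁ A₂] [HasBinaryBiproduct B₁ B₂]

lemma map_biprodElement (α : U.obj (op A₁, B₁)) (β : U.obj (op A₂, B₂))
    {X : Aᵒᵖ} {Y : B} (p : op (A₁ ⊞ A₂) ⟶ X) (q : B₁ ⊞ B₂ ⟶ Y) :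
    U.map ((p, q) : (op (A₁ ⊞ A₂), B₁ ⊞ B₂) ⟶ (X, Y)) (U.biprodElement α β)
      = U.map (((biprod.fst : A₁ ⊞ A₂ ⟶ A₁).op ≫ p, biprod.inl ≫ q) :
          (op A₁, B₁) ⟶ (X, Y)) α
        + U.map (((biprod.snd : A₁ ⊞ A₂ ⟶ A₂).op ≫ p, biprod.inr ≫ q) :
          (op A₂, B₂) ⟶ (X, Y)) β := by
  rw [biprodElement, _root_.map_add, ← comp_apply, ← comp_apply, ← U.map_comp, ← U.map_comp]
  rfl

lemma map_inl_op_biprodElement (hU : U.IsAdditiveInFst)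
    (α : U.obj (op A₁, B₁)) (β : U.obj (op A₂, B₂)) :
    U.map (((biprod.inl : A₁ ⟶ A₁ ⊞ A₂).op, 𝟙 (B₁ ⊞ B₂)) :
        (op (A₁ ⊞ A₂), B₁ ⊞ B₂) ⟶ (op A₁, B₁ ⊞ B₂)) (U.biprodElement α β)
      = U.map ((𝟙 (op A₁), (biprod.inl : B₁ ⟶ B₁ ⊞ B₂)) :
        (op A₁, B₁) ⟶ (op A₁, B₁ ⊞ B₂)) α := by
  rw [map_biprodElement]
  simp only [← op_comp, biprod.inl_fst, biprod.inl_snd, op_id, op_zero, Category.comp_id,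
    hU.map_zero_fst, add_zero]

lemma map_inr_op_biprodElement (hU : U.IsAdditiveInFst)
    (α : U.obj (op A₁, B₁)) (β : U.obj (op A₂, B₂)) :
    U.map (((biprod.inr : A₂ ⟶ A₁ ⊞ A₂).op, 𝟙 (B₁ ⊞ B₂)) :
        (op (A₁ ⊞ A₂), B₁ ⊞ B₂) ⟶ (op A₂, B₁ ⊞ B₂)) (U.biprodElement α β)
      = U.map ((𝟙 (op A₂), (biprod.inr : B₂ ⟶ B₁ ⊞ B₂)) :
        (op A₂, B₂) ⟶ (op A₂, B₁ ⊞ B₂)) β := by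
  rw [map_biprodElement]
  simp only [← op_comp, biprod.inr_fst, biprod.inr_snd, op_id, op_zero, Category.comp_id,
    hU.map_zero_fst, zero_add]

lemma map_fst_biprodElement (hU : U.IsAdditiveInSnd)
    (α : U.obj (op A₁, B₁)) (β : U.obj (op A₂, B₂)) :
    U.map ((𝟙 (op (A₁ ⊞ A₂)), (biprod.fst : B₁ ⊞ B₂ ⟶ B₁)) :
        (op (A₁ ⊞ A₂), B₁ ⊞ B₂) ⟶ (op (A₁ ⊞ A₂), B₁)) (U.biprodElement α β)
      = U.map (((biprod.fst : A₁ ⊞ A₂ ⟶ A₁).op, 𝟙 B₁) :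
        (op A₁, B₁) ⟶ (op (A₁ ⊞ A₂), B₁)) α := by
  rw [map_biprodElement]
  simp only [biprod.inl_fst, biprod.inr_fst, Category.comp_id, hU.map_zero_snd, add_zero]

lemma map_snd_biprodElement (hU : U.IsAdditiveInSnd)
    (α : U.obj (op A₁, B₁)) (β : U.obj (op A₂, B₂)) :
    U.map ((𝟙 (op (A₁ ⊞ A₂)), (biprod.snd : B₁ ⊞ B₂ ⟶ B₂)) :
        (op (A₁ ⊞ A₂), B₁ ⊞ B₂) ⟶ (op (A₁ ⊞ A₂), B₂)) (U.biprodElement α β)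
      = U.map (((biprod.snd : A₁ ⊞ A₂ ⟶ A₂).op, 𝟙 B₂) :
        (op A₂, B₂) ⟶ (op (A₁ ⊞ A₂), B₂)) β := by
  rw [map_biprodElement]
  simp only [biprod.inl_snd, biprod.inr_snd, Category.comp_id, hU.map_zero_snd, zero_add]

end Biprod

end CategoryTheory.Functor

/-- For a biadditive functor `U : Aᵒᵖ × B ⥤ Ab` on additive categories `A`, `B`,
the element `α ⊕ β := U(fst.op, inl)(α) + U(snd.op, inr)(β) ∈ U(A₁ ⊞ A₂, B₁ ⊞ B₂)`
is a biproduct of `α` and `β` in the bimodule category `El(U)`: the canonical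
injections and projections of the biproducts in `A` and `B` give morphisms
`α → α ⊕ β`, `β → α ⊕ β`, `α ⊕ β → α`, `α ⊕ β → β` in `El(U)` satisfying the
biproduct identities (which hold componentwise). Hence `El(U)` is additive. -/
theorem stmt_5 {A B : Type*} [Category A] [Category B]
    [Preadditive A] [Preadditive B]
    [HasBinaryBiproducts A] [HasBinaryBiproducts B]
    (U : (Aᵒᵖ × B) ⥤ AddCommGrpCat)
    (hadd₁ : ∀ {X X' : Aᵒᵖ} {Y Y' : B} (f f' : X ⟶ X') (g : Y ⟶ Y')
      (u : U.obj (X, Y)),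
      U.map ((f + f', g) : (X, Y) ⟶ (X', Y')) u
        = U.map ((f, g) : (X, Y) ⟶ (X', Y')) u
          + U.map ((f', g) : (X, Y) ⟶ (X', Y')) u)
    (hadd₂ : ∀ {X X' : Aᵒᵖ} {Y Y' : B} (f : X ⟶ X') (g g' : Y ⟶ Y')
      (u : U.obj (X, Y)),
      U.map ((f, g + g') : (X, Y) ⟶ (X', Y')) u
        = U.map ((f, g) : (X, Y) ⟶ (X', Y')) u
          + U.map ((f, g') : (X, Y) ⟶ (X', Y')) u)
    {A₁ A₂ : A} {B₁ B₂ : B}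
    (α : U.obj (op A₁, B₁)) (β : U.obj (op A₂, B₂)) :
    let s : U.obj (op (A₁ ⊞ A₂), B₁ ⊞ B₂) :=
      U.map (((biprod.fst : A₁ ⊞ A₂ ⟶ A₁).op, (biprod.inl : B₁ ⟶ B₁ ⊞ B₂)) :
          (op A₁, B₁) ⟶ (op (A₁ ⊞ A₂), B₁ ⊞ B₂)) α
      + U.map (((biprod.snd : A₁ ⊞ A₂ ⟶ A₂).op, (biprod.inr : B₂ ⟶ B₁ ⊞ B₂)) :
          (op A₂, B₂) ⟶ (op (A₁ ⊞ A₂), B₁ ⊞ B₂)) β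
    -- `(inl, inl)` is a morphism `α → s` in `El(U)`
    (U.map ((𝟙 (op A₁), (biprod.inl : B₁ ⟶ B₁ ⊞ B₂)) :
        (op A₁, B₁) ⟶ (op A₁, B₁ ⊞ B₂)) α
      = U.map (((biprod.inl : A₁ ⟶ A₁ ⊞ A₂).op, 𝟙 (B₁ ⊞ B₂)) :
        (op (A₁ ⊞ A₂), B₁ ⊞ B₂) ⟶ (op A₁, B₁ ⊞ B₂)) s) ∧
    -- `(inr, inr)` is a morphism `β → s`
    (U.map ((𝟙 (op A₂), (biprod.inr : B₂ ⟶ B₁ ⊞ B₂)) :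
        (op A₂, B₂) ⟶ (op A₂, B₁ ⊞ B₂)) β
      = U.map (((biprod.inr : A₂ ⟶ A₁ ⊞ A₂).op, 𝟙 (B₁ ⊞ B₂)) :
        (op (A₁ ⊞ A₂), B₁ ⊞ B₂) ⟶ (op A₂, B₁ ⊞ B₂)) s) ∧
    -- `(fst, fst)` is a morphism `s → α`
    (U.map ((𝟙 (op (A₁ ⊞ A₂)), (biprod.fst : B₁ ⊞ B₂ ⟶ B₁)) :
        (op (A₁ ⊞ A₂), B₁ ⊞ B₂) ⟶ (op (A₁ ⊞ A₂), B₁)) s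
      = U.map (((biprod.fst : A₁ ⊞ A₂ ⟶ A₁).op, 𝟙 B₁) :
        (op A₁, B₁) ⟶ (op (A₁ ⊞ A₂), B₁)) α) ∧
    -- `(snd, snd)` is a morphism `s → β`
    (U.map ((𝟙 (op (A₁ ⊞ A₂)), (biprod.snd : B₁ ⊞ B₂ ⟶ B₂)) :
        (op (A₁ ⊞ A₂), B₁ ⊞ B₂) ⟶ (op (A₁ ⊞ A₂), B₂)) s
      = U.map (((biprod.snd : A₁ ⊞ A₂ ⟶ A₂).op, 𝟙 B₂) :
        (op A₂, B₂) ⟶ (op (A₁ ⊞ A₂), B₂)) β) ∧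
    -- the biproduct identities hold componentwise
    ((biprod.fst ≫ biprod.inl + biprod.snd ≫ biprod.inr : A₁ ⊞ A₂ ⟶ A₁ ⊞ A₂)
        = 𝟙 (A₁ ⊞ A₂)) ∧
    ((biprod.fst ≫ biprod.inl + biprod.snd ≫ biprod.inr : B₁ ⊞ B₂ ⟶ B₁ ⊞ B₂)
        = 𝟙 (B₁ ⊞ B₂)) :=
  ⟨(U.map_inl_op_biprodElement hadd₁ α β).symm,
    (U.map_inr_op_biprodElement hadd₁ α β).symm,
    U.map_fst_biprodElement hadd₂ α β, U.map_snd_biprodElement hadd₂ α β,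
    biprod.total, biprod.total⟩
end
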